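/- For the symmetric matrix M* on FOUR, q-entailment equals p-entailment: (there is no valuation v with v(Γ) ⊆ {⊥, t} and v(α) ∈ {f, ⊥}) if and only if (there is no valuation v with v(Γ) ⊆ {⊤, t} and v(α) ∈ {f, ⊤}). -/

import Mathlib

/-- The four truth-values of Dunn-Belnap logic. -/
inductive Four where
  | f | bot | top | t
deriving DecidableEq, Repr

namespace Four

/-- Whether the value contains the classical value T. -/
def hasT : Four → Bool
  | t => true | top => true | _ => false

/-- Whether the value contains the classical value F. -/
def hasF : Four → Bool
  | f => true | top => true | _ => false

/-- Build a value from its T-part and F-part. -/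
def mk : Bool → Bool → Four
  | true, true => top
  | true, false => t
  | false, true => f
  | false, false => bot

/-- Logical order: x ≤_t y iff x∩{T} ⊆ y∩{T} and y∩{F} ⊆ x∩{F}. -/
def leT (x y : Four) : Prop :=
  (x.hasT = true → y.hasT = true) ∧ (y.hasF = true → x.hasF = true)

/-- Information order: x ≤_i y iff x ⊆ y. -/
def leI (x y : Four) : Prop :=
  (x.hasT = true → y.hasT = true) ∧ (x.hasF = true → y.hasF = true)

/-- Negation: swaps T and F membership. -/
def negT (x : Four) : Four := mk x.hasF x.hasT

/-- Infimum w.r.t. the logical order. -/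
def meetT (x y : Four) : Four := mk (x.hasT && y.hasT) (x.hasF || y.hasF)

/-- Supremum w.r.t. the logical order. -/
def joinT (x y : Four) : Four := mk (x.hasT || y.hasT) (x.hasF && y.hasF)

/-- Infimum w.r.t. the information order. -/
def meetI (x y : Four) : Four := mk (x.hasT && y.hasT) (x.hasF && y.hasF)

/-- Supremum w.r.t. the information order. -/
def joinI (x y : Four) : Four := mk (x.hasT || y.hasT) (x.hasF || y.hasF)

/-- Acceptance: designated set Y = {⊤, t}. -/
def acc (x : Four) : Prop := x = top ∨ x = t

/-- Rejection: set N = {f, ⊤}. -/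
def rej (x : Four) : Prop := x = f ∨ x = top

end Four

/-- Formulas of the language S: propositional variables, ¬, ∧, ∨. -/
inductive Form where
  | var : ℕ → Form
  | neg : Form → Form
  | conj : Form → Form → Form
  | disj : Form → Form → Form
deriving DecidableEq

/-- A valuation (agent) is determined by its values on variables; it is
extended homomorphically to all formulas. -/
def Form.eval (v : ℕ → Four) : Form → Four
  | var n => v n
  | neg φ => (φ.eval v).negT
  | conj φ ψ => (φ.eval v).meetT (ψ.eval v)
  | disj φ ψ => (φ.eval v).joinT (ψ.eval v)

open Four Form

/-- Truth-preserving (Tarskian) entailment ⊨ᵗ = ⊨⁴. -/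
def entT (Γ : Set Form) (α : Form) : Prop :=
  ¬ ∃ v : ℕ → Four, (∀ γ ∈ Γ, acc (γ.eval v)) ∧ ¬ acc (α.eval v)

/-- Falsity entailment ⊨ᶠ: no valuation not-rejects all premises while rejecting the conclusion. -/
def entF (Γ : Set Form) (α : Form) : Prop :=
  ¬ ∃ v : ℕ → Four, (∀ γ ∈ Γ, ¬ rej (γ.eval v)) ∧ rej (α.eval v)

/-- q-entailment: no valuation not-rejects all premises while not-accepting the conclusion. -/
def entQ (Γ : Set Form) (α : Form) : Prop :=
  ¬ ∃ v : ℕ → Four, (∀ γ ∈ Γ, ¬ rej (γ.eval v)) ∧ ¬ acc (α.eval v)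

/-- p-entailment: no valuation accepts all premises while rejecting the conclusion. -/
def entP (Γ : Set Form) (α : Form) : Prop :=
  ¬ ∃ v : ℕ → Four, (∀ γ ∈ Γ, acc (γ.eval v)) ∧ rej (α.eval v)

/-- B-entailment (Γ | Ψ ⊨ Φ | Δ): no valuation accepts all of Γ,
not-accepts all of Δ, rejects all of Φ and not-rejects all of Ψ. -/
def Bent (Γ Ψ Φ Δ : Set Form) : Prop :=
  ¬ ∃ v : ℕ → Four,
    (∀ γ ∈ Γ, acc (γ.eval v)) ∧ (∀ δ ∈ Δ, ¬ acc (δ.eval v)) ∧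
    (∀ φ ∈ Φ, rej (φ.eval v)) ∧ (∀ ψ ∈ Ψ, ¬ rej (ψ.eval v))

/-!
Swapping ⊤ and ⊥ commutes with the Dunn–Belnap ¬, ∧, ∨ and exchanges "not rejected" with
"accepted" and "not accepted" with "rejected". Composing a valuation with this swap therefore
turns a countermodel to q-entailment into one to p-entailment, and back.
-/

namespace Four

def dual : Four → Four
  | f => f | bot => top | top => bot | t => t

@[simp]
lemma negT_dual (x : Four) : x.dual.negT = x.negT.dual := by
  cases x <;> rfl

@[simp]
lemma meetT_dual (x y : Four) : x.dual.meetT y.dual = (x.meetT y).dual := by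
  cases x <;> cases y <;> rfl

@[simp]
lemma joinT_dual (x y : Four) : x.dual.joinT y.dual = (x.joinT y).dual := by
  cases x <;> cases y <;> rfl

lemma acc_dual_iff (x : Four) : acc x.dual ↔ ¬ rej x := by
  cases x <;> simp [dual, acc, rej]

lemma rej_dual_iff (x : Four) : rej x.dual ↔ ¬ acc x := by
  cases x <;> simp [dual, acc, rej]

end Four

lemma Form.eval_dual_comp (v : ℕ → Four) (φ : Form) :
    φ.eval (Four.dual ∘ v) = (φ.eval v).dual := by
  induction φ with
  | var n => rfl
  | neg φ ih => simp only [Form.eval, ih, negT_dual]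
  | conj φ ψ ihφ ihψ => simp only [Form.eval, ihφ, ihψ, meetT_dual]
  | disj φ ψ ihφ ihψ => simp only [Form.eval, ihφ, ihψ, joinT_dual]

/-- for the symmetric matrix, q-entailment coincides with p-entailment. -/
theorem entQ_eq_entP : ∀ (Γ : Set Form) (α : Form), entQ Γ α ↔ entP Γ α := by
  intro Γ α
  refine not_congr ⟨fun ⟨v, hΓ, hα⟩ => ⟨dual ∘ v, ?_, ?_⟩, fun ⟨v, hΓ, hα⟩ => ⟨dual ∘ v, ?_, ?_⟩⟩ <;>
    simpa only [eval_dual_comp, acc_dual_iff, rej_dual_iff, not_not]
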